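/- Let Λ₁, Λ₂ be d×r real matrices of full column rank with col(Λ₁) ≠ col(Λ₂) and rank(Λ₁ᵀΛ₂) = r. Set P_I¹ = (1/2)(Λ₁(Λ₁ᵀΛ₁)⁻¹Λ₁ᵀ + I_d). Then there is no invertible r×r matrix Φ such that P_I¹Λ₂ = Λ₂Φ. -/

import Mathlib

open Matrix

/-- Orthogonal projection onto the column space of `Λ`. -/
noncomputable def proj {d r : ℕ} (Λ : Matrix (Fin d) (Fin r) ℝ) : Matrix (Fin d) (Fin d) ℝ :=
  Λ * (Λᵀ * Λ)⁻¹ * Λᵀ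

/-- The transformation `P_I = (1/2)(proj Λ + I)`. -/
noncomputable def projI {d r : ℕ} (Λ : Matrix (Fin d) (Fin r) ℝ) : Matrix (Fin d) (Fin d) ℝ :=
  (1 / 2 : ℝ) • (proj Λ + 1)

/-- A square real matrix of full rank is a unit. -/
lemma isUnit_of_rank_eq' {r : ℕ} (A : Matrix (Fin r) (Fin r) ℝ) (h : A.rank = r) :
    IsUnit A := by
  rw [← Matrix.mulVec_surjective_iff_isUnit]
  have htop : LinearMap.range A.mulVecLin = ⊤ := by
    apply Submodule.eq_top_of_finrank_eq
    simpa [Matrix.rank] using h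
  have : Function.Surjective A.mulVecLin := LinearMap.range_eq_top.mp htop
  exact this

theorem no_rotation_of_distinct_colspaces {d r : ℕ} (Λ₁ Λ₂ : Matrix (Fin d) (Fin r) ℝ)
    (h₁ : Λ₁.rank = r) (h₂ : Λ₂.rank = r)
    (hne : LinearMap.range Λ₁.mulVecLin ≠ LinearMap.range Λ₂.mulVecLin)
    (hrank : (Λ₁ᵀ * Λ₂).rank = r) :
    ¬ ∃ Φ : Matrix (Fin r) (Fin r) ℝ, IsUnit Φ ∧ projI Λ₁ * Λ₂ = Λ₂ * Φ := by
  rintro ⟨Φ, hΦu, hΦ⟩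
  have hG : IsUnit (Λ₁ᵀ * Λ₁) :=
    isUnit_of_rank_eq' _ (by rw [Matrix.rank_transpose_mul_self, h₁])
  have hGd : IsUnit (Λ₁ᵀ * Λ₁).det := (Matrix.isUnit_iff_isUnit_det _).mp hG
  have hM : IsUnit (Λ₁ᵀ * Λ₂) := isUnit_of_rank_eq' _ hrank
  have hab : Λ₁ᵀ * proj Λ₁ = Λ₁ᵀ := by
    unfold proj
    rw [← Matrix.mul_assoc, ← Matrix.mul_assoc, Matrix.mul_nonsing_inv _ hGd,
      Matrix.one_mul]
  have h2 : proj Λ₁ * Λ₂ + Λ₂ = (2:ℝ) • (Λ₂ * Φ) := by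
    have := congrArg (fun M => (2:ℝ) • M) hΦ
    simpa [projI, Matrix.smul_mul, smul_smul, Matrix.add_mul] using this
  have hP : proj Λ₁ * Λ₂ = Λ₂ * ((2:ℝ) • Φ - 1) := by
    rw [Matrix.mul_sub, Matrix.mul_one, Matrix.mul_smul]
    exact eq_sub_of_add_eq h2
  have h3 : (Λ₁ᵀ * Λ₂) * ((2:ℝ) • Φ - 1) = (Λ₁ᵀ * Λ₂) * 1 := by
    rw [Matrix.mul_one]
    calc (Λ₁ᵀ * Λ₂) * ((2:ℝ) • Φ - 1) = Λ₁ᵀ * (Λ₂ * ((2:ℝ) • Φ - 1)) := by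
          rw [Matrix.mul_assoc]
      _ = Λ₁ᵀ * (proj Λ₁ * Λ₂) := by rw [hP]
      _ = (Λ₁ᵀ * proj Λ₁) * Λ₂ := by rw [Matrix.mul_assoc]
      _ = Λ₁ᵀ * Λ₂ := by rw [hab]
  have hX : (2:ℝ) • Φ - 1 = 1 := (IsUnit.mul_right_inj hM).mp h3
  have hΦ1 : Φ = 1 := by
    have h4 : (2:ℝ) • Φ = (2:ℝ) • (1 : Matrix (Fin r) (Fin r) ℝ) := by
      rw [sub_eq_iff_eq_add] at hX
      rw [hX, two_smul]
    exact smul_right_injective _ (two_ne_zero) h4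
  have hProj : proj Λ₁ * Λ₂ = Λ₂ := by
    rw [hP, hΦ1]
    simp [two_smul, Matrix.mul_sub]
  have hfac : Λ₂ = Λ₁ * ((Λ₁ᵀ * Λ₁)⁻¹ * Λ₁ᵀ * Λ₂) := by
    conv_lhs => rw [← hProj]
    unfold proj
    simp [Matrix.mul_assoc]
  have hle : LinearMap.range Λ₂.mulVecLin ≤ LinearMap.range Λ₁.mulVecLin := by
    rintro x ⟨y, rfl⟩
    refine ⟨((Λ₁ᵀ * Λ₁)⁻¹ * Λ₁ᵀ * Λ₂).mulVec y, ?_⟩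
    simp only [Matrix.mulVecLin_apply]
    rw [Matrix.mulVec_mulVec, ← hfac]
  have heq : LinearMap.range Λ₂.mulVecLin = LinearMap.range Λ₁.mulVecLin := by
    apply Submodule.eq_of_le_of_finrank_le hle
    show Module.finrank ℝ _ ≤ Module.finrank ℝ _
    rw [show Module.finrank ℝ ↥(LinearMap.range Λ₁.mulVecLin) = Λ₁.rank from rfl,
      show Module.finrank ℝ ↥(LinearMap.range Λ₂.mulVecLin) = Λ₂.rank from rfl, h₁, h₂]
  exact hne heq.symm
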